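/- Mixing entropy of a mixture is at most the entropy of the mixing distribution plus the average mixing entropy: let Ω ⊂ ℝ^n be a compact convex set, let β_1, …, β_m ∈ Ω, and let p be a probability distribution on {1,…,m}. Then S(Σ_x p_x β_x) ≤ H(p) + Σ_x p_x S(β_x), where H(p) = −Σ_x p_x log₂ p_x is the Shannon entropy. -/

import Mathlib

/-- Shannon entropy (base 2) of a finite probability vector. -/
noncomputable def shannon {n : ℕ} (p : Fin n → ℝ) : ℝ :=
  ∑ i, -(p i * Real.logb 2 (p i))

/-- Mixing (preparation) entropy of a point `ω` of a convex set `Ω`: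
the infimum of the Shannon entropies of the coefficients over all finite
convex decompositions of `ω` into extreme points of `Ω`. -/
noncomputable def mixEnt {V : Type*} [AddCommGroup V] [Module ℝ V]
    (Ω : Set V) (ω : V) : ℝ :=
  sInf {h : ℝ | ∃ (n : ℕ) (p : Fin n → ℝ) (v : Fin n → V),
    (∀ i, 0 ≤ p i) ∧ (∑ i, p i = 1) ∧ (∀ i, v i ∈ Ω.extremePoints ℝ) ∧
    ω = ∑ i, p i • v i ∧ h = shannon p}

/-!
Choose for each `x` a decomposition `β x = ∑ i, q x i • v x i` into extreme points with
`shannon (q x) < mixEnt Ω (β x) + ε`. The weights `p x * q x i` on the points `v x i` decompose the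
mixture, and by the chain rule their entropy is `shannon p + ∑ x, p x * shannon (q x)`.

Decompositions exist by Minkowski's theorem, proved by induction on the dimension: a point of `s`
outside `interior s` lies in an extreme subset of `s` contained in a translate of a proper subspace
(cut out by a supporting hyperplane, or the affine span of `s` if its interior is empty), and every
point of `s` lies on a segment between two such points.
-/

open Set Module

theorem AffineMap.image_extremePoints_subset {𝕜 E F : Type*} [Ring 𝕜] [PartialOrder 𝕜]
    [IsOrderedRing 𝕜] [AddCommGroup E] [Module 𝕜 E] [AddCommGroup F] [Module 𝕜 F]
    (f : E →ᵃ[𝕜] F) (hf : Function.Injective f) (s : Set E) :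
    f '' s.extremePoints 𝕜 ⊆ (f '' s).extremePoints 𝕜 := by
  rintro _ ⟨x, hx, rfl⟩
  rw [mem_extremePoints] at hx ⊢
  refine ⟨mem_image_of_mem f hx.1, ?_⟩
  rintro _ ⟨a, ha, rfl⟩ _ ⟨b, hb, rfl⟩ hab
  rw [← image_openSegment, hf.mem_set_image] at hab
  obtain ⟨rfl, rfl⟩ := hx.2 a ha b hb hab
  exact ⟨rfl, rfl⟩

section Minkowski

variable {E : Type*} [NormedAddCommGroup E] [NormedSpace ℝ E]

theorem IsCompact.exists_mem_segment_notMem_interior [Nontrivial E] {s : Set E}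
    (hsc : IsCompact s) {x : E} (hx : x ∈ s) :
    ∃ y ∈ s \ interior s, ∃ z ∈ s \ interior s, x ∈ segment ℝ y z := by
  obtain ⟨v, hv⟩ := exists_ne (0 : E)
  let g : ℝ →ᵃ[ℝ] E := AffineMap.lineMap x (x + v)
  have hg : Topology.IsClosedEmbedding g := by
    convert (Homeomorph.addRight x).isClosedEmbedding.comp (isClosedEmbedding_smul_left (𝕜 := ℝ) hv)
      using 1
    ext t
    simp [g, AffineMap.lineMap_apply]
  have h0 : (0 : ℝ) ∈ g ⁻¹' s := by simpa [g] using hx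
  have hT : IsCompact (g ⁻¹' s) := hg.isCompact_preimage hsc
  obtain ⟨a, haT, ha⟩ := hT.exists_isMinOn ⟨0, h0⟩ continuousOn_id
  obtain ⟨b, hbT, hb⟩ := hT.exists_isMaxOn ⟨0, h0⟩ continuousOn_id
  have hint : interior (g ⁻¹' s) ⊆ Ioo a b := by
    rw [← interior_Icc]
    exact interior_mono fun t ht => ⟨ha ht, hb ht⟩
  have hbdry : ∀ t ∈ g ⁻¹' s, t ∉ Ioo a b → g t ∈ s \ interior s := fun t ht hto =>
    ⟨ht, fun hti => hto (hint (preimage_interior_subset_interior_preimage hg.continuous hti))⟩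
  refine ⟨g a, hbdry a haT (by simp), g b, hbdry b hbT (by simp), ?_⟩
  rw [← image_segment, segment_eq_Icc ((ha h0).trans (hb h0))]
  exact ⟨0, ⟨ha h0, hb h0⟩, by simp [g]⟩

variable [FiniteDimensional ℝ E]

theorem Convex.exists_isExtreme_subset_vadd_of_notMem_interior {s : Set E} (hsc : IsCompact s)
    (hs : Convex ℝ s) {y : E} (hy : y ∈ s) (hyi : y ∉ interior s) :
    ∃ F : Set E, IsExtreme ℝ s F ∧ IsCompact F ∧ Convex ℝ F ∧ y ∈ F ∧
      ∃ K : Submodule ℝ E, K ≠ ⊤ ∧ ∀ z ∈ F, z - y ∈ K := by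
  rcases (interior s).eq_empty_or_nonempty with hint | ⟨a, ha⟩
  · have hspan : vectorSpan ℝ s ≠ ⊤ := by
      rw [Ne, ← AffineSubspace.affineSpan_eq_top_iff_vectorSpan_eq_top_of_nonempty ℝ E E ⟨y, hy⟩,
        ← hs.interior_nonempty_iff_affineSpan_eq_top, hint]
      exact not_nonempty_empty
    exact ⟨s, .rfl, hsc, hs, hy, _, hspan, fun z hz => vsub_mem_vectorSpan ℝ hz hy⟩
  obtain ⟨l, hl⟩ := geometric_hahn_banach_open_point hs.interior isOpen_interior hyi
  have hly : ∀ z ∈ s, l z ≤ l y := by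
    have : closure (interior s) ⊆ {z | l z ≤ l y} :=
      closure_minimal (fun z hz => (hl z hz).le) (isClosed_le l.continuous continuous_const)
    rw [hs.closure_interior_eq_closure_of_nonempty_interior ⟨a, ha⟩] at this
    exact fun z hz => this (subset_closure hz)
  have hexp : IsExposed ℝ s {z ∈ s | ∀ w ∈ s, l w ≤ l z} := fun _ => ⟨l, rfl⟩
  refine ⟨_, hexp.isExtreme, hexp.isCompact hsc, hexp.convex hs, ⟨hy, hly⟩,
    LinearMap.ker (l : E →ₗ[ℝ] ℝ), fun htop => ?_, fun z hz => ?_⟩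
  · have hlz : ∀ z, l z = 0 := fun z => by
      simpa using LinearMap.congr_fun (LinearMap.ker_eq_top.mp htop) z
    linarith [hl a ha, hlz a, hlz y]
  · rw [LinearMap.mem_ker, ContinuousLinearMap.coe_coe, map_sub, sub_eq_zero]
    exact le_antisymm (hly z hz.1) (hz.2 y hy)

theorem Submodule.subset_convexHull_extremePoints_of_sub_mem (K : Submodule ℝ E)
    (hK : ∀ t : Set K, IsCompact t → Convex ℝ t → t ⊆ convexHull ℝ (t.extremePoints ℝ))
    {s : Set E} (hsc : IsCompact s) (hs : Convex ℝ s) {x : E} (hsK : ∀ y ∈ s, y - x ∈ K) :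
    s ⊆ convexHull ℝ (s.extremePoints ℝ) := by
  let f : K →ᵃ[ℝ] E := (AffineEquiv.constVAdd ℝ E x).toAffineMap.comp K.subtype.toAffineMap
  have hf : Topology.IsClosedEmbedding f :=
    (Homeomorph.addLeft x).isClosedEmbedding.comp
      K.closed_of_finiteDimensional.isClosedEmbedding_subtypeVal
  have hs_eq : f '' (f ⁻¹' s) = s :=
    image_preimage_eq_of_subset fun y hy => ⟨⟨y - x, hsK y hy⟩, by simp [f]⟩
  calc s = f '' (f ⁻¹' s) := hs_eq.symm
    _ ⊆ f '' convexHull ℝ ((f ⁻¹' s).extremePoints ℝ) :=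
      image_mono (hK _ (hf.isCompact_preimage hsc) (hs.affine_preimage f))
    _ = convexHull ℝ (f '' (f ⁻¹' s).extremePoints ℝ) := f.image_convexHull _
    _ ⊆ convexHull ℝ (s.extremePoints ℝ) :=
      convexHull_mono <| by
        simpa only [hs_eq] using f.image_extremePoints_subset hf.injective (f ⁻¹' s)

theorem subset_convexHull_extremePoints_of_finrank_eq (N : ℕ) (E : Type*)
    [NormedAddCommGroup E] [NormedSpace ℝ E] [FiniteDimensional ℝ E] (hN : finrank ℝ E = N)
    {s : Set E} (hsc : IsCompact s) (hs : Convex ℝ s) :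
    s ⊆ convexHull ℝ (s.extremePoints ℝ) := by
  induction N using Nat.strong_induction_on generalizing E with
  | _ N IH =>
  intro x hx
  rcases subsingleton_or_nontrivial E with _ | _
  · rw [subsingleton_of_subsingleton.eq_singleton_of_mem hx, extremePoints_singleton,
      convexHull_singleton]
    exact mem_singleton x
  have hbdry : ∀ y ∈ s \ interior s, y ∈ convexHull ℝ (s.extremePoints ℝ) := by
    rintro y ⟨hy, hyi⟩
    obtain ⟨F, hF, hFc, hFconv, hyF, K, hK, hFK⟩ :=
      hs.exists_isExtreme_subset_vadd_of_notMem_interior hsc hy hyi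
    have hKN : finrank ℝ K < N := hN ▸ Submodule.finrank_lt hK
    exact convexHull_mono hF.extremePoints_subset_extremePoints
      (K.subset_convexHull_extremePoints_of_sub_mem (fun t => IH _ hKN K rfl) hFc hFconv hFK hyF)
  obtain ⟨y, hy, z, hz, hxyz⟩ := hsc.exists_mem_segment_notMem_interior hx
  exact (convex_convexHull ℝ _).segment_subset (hbdry y hy) (hbdry z hz) hxyz

theorem IsCompact.subset_convexHull_extremePoints {s : Set E} (hsc : IsCompact s)
    (hs : Convex ℝ s) : s ⊆ convexHull ℝ (s.extremePoints ℝ) :=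
  subset_convexHull_extremePoints_of_finrank_eq _ E rfl hsc hs

end Minkowski

section MixingEntropy

variable {V : Type*} [AddCommGroup V] [Module ℝ V]

theorem shannon_nonneg {k : ℕ} {p : Fin k → ℝ} (hp : ∀ i, 0 ≤ p i) (hpsum : ∑ i, p i = 1) :
    0 ≤ shannon p :=
  Finset.sum_nonneg fun i _ => neg_nonneg.mpr <| mul_nonpos_of_nonneg_of_nonpos (hp i) <|
    Real.logb_nonpos one_lt_two (hp i) <| hpsum ▸ Finset.single_le_sum (fun j _ => hp j) (by simp)

theorem neg_mul_logb_mul (a b : ℝ) :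
    -(a * b * Real.logb 2 (a * b)) = b * -(a * Real.logb 2 a) + a * -(b * Real.logb 2 b) := by
  have h : ∀ t, -(t * Real.logb 2 t) = Real.negMulLog t / Real.log 2 := fun t => by
    rw [Real.negMulLog, Real.logb]
    ring
  rw [h, h, h, Real.negMulLog_mul]
  ring

def decompositionEntropies (Ω : Set V) (ω : V) : Set ℝ :=
  {h | ∃ (k : ℕ) (p : Fin k → ℝ) (u : Fin k → V),
    (∀ i, 0 ≤ p i) ∧ (∑ i, p i = 1) ∧ (∀ i, u i ∈ Ω.extremePoints ℝ) ∧
    ω = ∑ i, p i • u i ∧ h = shannon p}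

theorem mixEnt_eq_sInf_decompositionEntropies (Ω : Set V) (ω : V) :
    mixEnt Ω ω = sInf (decompositionEntropies Ω ω) :=
  rfl

theorem bddBelow_decompositionEntropies (Ω : Set V) (ω : V) :
    BddBelow (decompositionEntropies Ω ω) := by
  refine ⟨0, ?_⟩
  rintro _ ⟨k, p, u, hp, hpsum, -, -, rfl⟩
  exact shannon_nonneg hp hpsum

theorem sum_neg_mul_logb_mem_decompositionEntropies {Ω : Set V} {ω : V} {ι : Type*} [Fintype ι]
    {q : ι → ℝ} {v : ι → V} (hq : ∀ i, 0 ≤ q i) (hqsum : ∑ i, q i = 1)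
    (hv : ∀ i, v i ∈ Ω.extremePoints ℝ) (hω : ω = ∑ i, q i • v i) :
    ∑ i, -(q i * Real.logb 2 (q i)) ∈ decompositionEntropies Ω ω := by
  let e := (Fintype.equivFin ι).symm
  exact ⟨_, q ∘ e, v ∘ e, fun i => hq _, (e.sum_comp q).trans hqsum, fun i => hv _,
    hω.trans (e.sum_comp _).symm, (e.sum_comp _).symm⟩

theorem mixEnt_le_of_decomposition {Ω : Set V} {ω : V} {ι : Type*} [Fintype ι] {q : ι → ℝ}
    {v : ι → V} (hq : ∀ i, 0 ≤ q i) (hqsum : ∑ i, q i = 1)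
    (hv : ∀ i, v i ∈ Ω.extremePoints ℝ) (hω : ω = ∑ i, q i • v i) :
    mixEnt Ω ω ≤ ∑ i, -(q i * Real.logb 2 (q i)) := by
  rw [mixEnt_eq_sInf_decompositionEntropies]
  exact csInf_le (bddBelow_decompositionEntropies Ω ω)
    (sum_neg_mul_logb_mem_decompositionEntropies hq hqsum hv hω)

theorem exists_decomposition_shannon_lt {E : Type*} [NormedAddCommGroup E] [NormedSpace ℝ E]
    [FiniteDimensional ℝ E] {Ω : Set E} (hcomp : IsCompact Ω) (hconv : Convex ℝ Ω) {ω : E}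
    (hω : ω ∈ Ω) {ε : ℝ} (hε : 0 < ε) :
    ∃ (k : ℕ) (q : Fin k → ℝ) (v : Fin k → E),
      (∀ i, 0 ≤ q i) ∧ (∑ i, q i = 1) ∧ (∀ i, v i ∈ Ω.extremePoints ℝ) ∧
      ω = ∑ i, q i • v i ∧ shannon q < mixEnt Ω ω + ε := by
  rw [mixEnt_eq_sInf_decompositionEntropies]
  obtain ⟨ι, _, q, v, hq, hqsum, hv, hqv⟩ :=
    mem_convexHull_iff_exists_fintype.mp (hcomp.subset_convexHull_extremePoints hconv hω)
  obtain ⟨_, ⟨k, q, v, hq, hqsum, hv, hqv, rfl⟩, hlt⟩ := Real.lt_sInf_add_pos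
    ⟨_, sum_neg_mul_logb_mem_decompositionEntropies hq hqsum hv hqv.symm⟩ hε
  exact ⟨k, q, v, hq, hqsum, hv, hqv, hlt⟩

theorem sum_sigma_neg_mul_logb_mul {m : ℕ} {k : Fin m → ℕ} (p : Fin m → ℝ)
    (q : ∀ x, Fin (k x) → ℝ) (hqsum : ∀ x, ∑ i, q x i = 1) :
    ∑ j : Σ x, Fin (k x), -(p j.1 * q j.1 j.2 * Real.logb 2 (p j.1 * q j.1 j.2)) =
      shannon p + ∑ x, p x * shannon (q x) := by
  simp only [Fintype.sum_sigma, neg_mul_logb_mul, Finset.sum_add_distrib, ← Finset.sum_mul,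
    ← Finset.mul_sum, hqsum, one_mul]
  rfl

theorem mixEnt_sum_smul_le {m : ℕ} {Ω : Set V} {β : Fin m → V} {p : Fin m → ℝ}
    (hp : ∀ x, 0 ≤ p x) (hpsum : ∑ x, p x = 1) {k : Fin m → ℕ} {q : ∀ x, Fin (k x) → ℝ}
    {v : ∀ x, Fin (k x) → V} (hq : ∀ x i, 0 ≤ q x i) (hqsum : ∀ x, ∑ i, q x i = 1)
    (hv : ∀ x i, v x i ∈ Ω.extremePoints ℝ) (hβ : ∀ x, β x = ∑ i, q x i • v x i) :
    mixEnt Ω (∑ x, p x • β x) ≤ shannon p + ∑ x, p x * shannon (q x) := by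
  rw [← sum_sigma_neg_mul_logb_mul p q hqsum]
  refine mixEnt_le_of_decomposition (fun j => mul_nonneg (hp j.1) (hq j.1 j.2)) ?_
    (fun j => hv j.1 j.2) ?_
  · simp only [Fintype.sum_sigma, ← Finset.mul_sum, hqsum, mul_one, hpsum]
  · simp only [Fintype.sum_sigma, hβ, Finset.smul_sum, smul_smul]

end MixingEntropy

/-- the mixing entropy of a mixture is at most the Shannon entropy
of the mixing distribution plus the average mixing entropy of the components. -/
theorem mixEnt_mixture_le {n m : ℕ} (Ω : Set (Fin n → ℝ))
    (hconv : Convex ℝ Ω) (hcomp : IsCompact Ω)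
    (β : Fin m → (Fin n → ℝ)) (hβ : ∀ x, β x ∈ Ω)
    (p : Fin m → ℝ) (hp : ∀ x, 0 ≤ p x) (hpsum : ∑ x, p x = 1) :
    mixEnt Ω (∑ x, p x • β x) ≤ shannon p + ∑ x, p x * mixEnt Ω (β x) := by
  refine le_of_forall_pos_le_add fun ε hε => ?_
  choose k q v hq hqsum hv hβq hqε using
    fun x => exists_decomposition_shannon_lt hcomp hconv (hβ x) hε
  calc mixEnt Ω (∑ x, p x • β x) ≤ shannon p + ∑ x, p x * shannon (q x) :=
        mixEnt_sum_smul_le hp hpsum hq hqsum hv hβq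
    _ ≤ shannon p + ∑ x, p x * (mixEnt Ω (β x) + ε) := by
        gcongr with x
        exacts [hp x, (hqε x).le]
    _ = shannon p + ∑ x, p x * mixEnt Ω (β x) + ε := by
        simp only [mul_add, Finset.sum_add_distrib, ← Finset.sum_mul, hpsum, one_mul, add_assoc]
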